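/- arXiv:2503.22086 — 3 statements merged into one kernel-verified Lean document; each statement's English description precedes it below -/
import Mathlib

section
/- For p ≥ 2 there is a constant c_p > 0, depending only on p, such that for all vectors a, b in ℝ^N one has ⟨|b|^{p−2} b − |a|^{p−2} a, b − a⟩ ≥ c_p |b − a|^p, where ⟨·,·⟩ is the standard inner product and |·| the Euclidean norm. -/
/-!
Writing `s = ‖a‖ ^ (p - 2)` and `t = ‖b‖ ^ (p - 2)`, the inner product splits as
`(s + t) / 2 * ‖b - a‖ ^ 2 + (t - s) / 2 * (‖b‖ ^ 2 - ‖a‖ ^ 2)`. The second term is nonnegative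
because `x ↦ x ^ (p - 2)` and `x ↦ x ^ 2` are both monotone on `[0, ∞)`, and in the first
`s + t ≥ (‖b - a‖ / 2) ^ (p - 2)` since `max ‖a‖ ‖b‖ ≥ ‖b - a‖ / 2`. This gives `c_p = 2 ^ (1 - p)`.
-/

open Real

theorem rpow_sub_rpow_mul_sq_sub_sq_nonneg {r x y : ℝ} (hr : 0 ≤ r) (hx : 0 ≤ x) (hy : 0 ≤ y) :
    0 ≤ (y ^ r - x ^ r) * (y ^ 2 - x ^ 2) :=
  ((monotoneOn_rpow_Ici_of_exponent_nonneg hr).monovaryOn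
    (pow_left_monotoneOn (n := 2))).sub_mul_sub_nonneg (Set.mem_Ici.2 hx) (Set.mem_Ici.2 hy)

theorem half_norm_sub_rpow_le_add {E : Type*} [SeminormedAddCommGroup E] {r : ℝ} (hr : 0 ≤ r)
    (a b : E) : (‖b - a‖ / 2) ^ r ≤ ‖a‖ ^ r + ‖b‖ ^ r := by
  have hmax : ‖b - a‖ / 2 ≤ max ‖a‖ ‖b‖ := by
    linarith [norm_sub_le b a, le_max_left ‖a‖ ‖b‖, le_max_right ‖a‖ ‖b‖]
  calc (‖b - a‖ / 2) ^ r ≤ max ‖a‖ ‖b‖ ^ r := rpow_le_rpow (by positivity) hmax hr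
    _ = max (‖a‖ ^ r) (‖b‖ ^ r) := (monotoneOn_rpow_Ici_of_exponent_nonneg hr).map_max
        (norm_nonneg a) (norm_nonneg b)
    _ ≤ ‖a‖ ^ r + ‖b‖ ^ r := max_le_add_of_nonneg (by positivity) (by positivity)

section

variable {E : Type*} [NormedAddCommGroup E] [InnerProductSpace ℝ E]

theorem real_inner_smul_sub_smul_sub (s t : ℝ) (a b : E) :
    inner ℝ (t • b - s • a) (b - a) =
      (s + t) / 2 * ‖b - a‖ ^ 2 + (t - s) / 2 * (‖b‖ ^ 2 - ‖a‖ ^ 2) := by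
  simp only [norm_sub_sq_real, inner_sub_left, inner_sub_right, real_inner_smul_left,
    real_inner_self_eq_norm_sq, real_inner_comm a b]
  ring

theorem two_rpow_one_sub_mul_rpow_le_real_inner {p : ℝ} (hp : 2 ≤ p) (a b : E) :
    2 ^ (1 - p) * ‖b - a‖ ^ p ≤ inner ℝ (‖b‖ ^ (p - 2) • b - ‖a‖ ^ (p - 2) • a) (b - a) := by
  have hr : 0 ≤ p - 2 := by linarith
  have hd := norm_nonneg (b - a)
  have hpow : ‖b - a‖ ^ (p - 2) * ‖b - a‖ ^ 2 = ‖b - a‖ ^ p := by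
    rw [← rpow_two, ← rpow_add' hd (by linarith), sub_add_cancel]
  have htwo : (2 : ℝ) ^ (1 - p) * 2 ^ (p - 2) * 2 = 1 := by
    rw [← rpow_add two_pos, ← rpow_add_one two_ne_zero, show 1 - p + (p - 2) + 1 = 0 by ring,
      rpow_zero]
  have hcoeff : 2 ^ (1 - p) * ‖b - a‖ ^ p = (‖b - a‖ / 2) ^ (p - 2) / 2 * ‖b - a‖ ^ 2 := by
    rw [div_rpow hd zero_le_two, ← hpow]
    field_simp
    linear_combination (‖b - a‖ ^ (p - 2) * ‖b - a‖ ^ 2) * htwo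
  rw [real_inner_smul_sub_smul_sub, hcoeff]
  have hmono := rpow_sub_rpow_mul_sq_sub_sq_nonneg hr (norm_nonneg a) (norm_nonneg b)
  have hsum := mul_le_mul_of_nonneg_right (half_norm_sub_rpow_le_add hr a b) (sq_nonneg ‖b - a‖)
  linarith

end

theorem stmt_3 (p : ℝ) (hp : 2 ≤ p) :
    ∃ c : ℝ, 0 < c ∧ ∀ (N : ℕ), 1 ≤ N → ∀ a b : EuclideanSpace ℝ (Fin N),
      (inner ℝ ((‖b‖ ^ (p - 2)) • b - (‖a‖ ^ (p - 2)) • a) (b - a) : ℝ) ≥ c * ‖b - a‖ ^ p :=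
  ⟨2 ^ (1 - p), rpow_pos_of_pos two_pos _, fun _ _ a b =>
    two_rpow_one_sub_mul_rpow_le_real_inner hp a b⟩
end

section
/- For 1 < p < 2 there is a constant c_p > 0, depending only on p, such that for all vectors a, b in ℝ^N, not both zero, one has ⟨|b|^{p−2} b − |a|^{p−2} a, b − a⟩ ≥ c_p |b − a|^2 (|a| + |b|)^{p−2}. -/
/-!
Write `s = ‖a‖`, `t = ‖b‖`. The inner product splits as
`(t^(p-1) - s^(p-1)) (t - s) + (s^(p-2) + t^(p-2)) (s t - ⟪a, b⟫)`, while
`‖b - a‖² = (t - s)² + 2 (s t - ⟪a, b⟫)`, and both brackets `s t - ⟪a, b⟫` are nonnegative by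
Cauchy–Schwarz. The radial term is controlled by the tangent line of the concave map
`x ↦ x^(p-1)` (Bernoulli's inequality) at `max s t`, and the angular term by
`(s + t)^(p-2) ≤ s^(p-2) + t^(p-2)`; this gives the constant `(p - 1) / 2`.
-/

open Real
open scoped RealInnerProductSpace

lemma rpow_le_rpow_add_mul_sub {q s t : ℝ} (hq0 : 0 ≤ q) (hq1 : q ≤ 1) (hs : 0 ≤ s)
    (ht : 0 < t) : s ^ q ≤ t ^ q + q * t ^ (q - 1) * (s - t) := by
  have hbern := rpow_one_add_le_one_add_mul_self (s := s / t - 1)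
    (by linarith [div_nonneg hs ht.le]) hq0 hq1
  rw [add_sub_cancel, div_rpow hs ht.le, div_le_iff₀ (rpow_pos_of_pos ht q)] at hbern
  calc s ^ q ≤ (1 + q * (s / t - 1)) * t ^ q := hbern
    _ = t ^ q + q * t ^ (q - 1) * (s - t) := by
      rw [rpow_sub_one ht.ne']
      field_simp

lemma mul_sq_mul_add_rpow_le_rpow_sub_rpow_mul_sub {q s t : ℝ} (hq0 : 0 ≤ q) (hq1 : q ≤ 1)
    (hs : 0 ≤ s) (ht : 0 ≤ t) :
    q * (t - s) ^ 2 * (s + t) ^ (q - 1) ≤ (t ^ q - s ^ q) * (t - s) := by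
  wlog hle : s ≤ t generalizing s t
  · have := this ht hs (by linarith)
    rw [add_comm t s] at this
    linarith
  rcases ht.eq_or_lt with rfl | htpos
  · simp [le_antisymm hle hs]
  have htan := rpow_le_rpow_add_mul_sub hq0 hq1 hs htpos
  have hmono : (s + t) ^ (q - 1) ≤ t ^ (q - 1) :=
    rpow_le_rpow_of_nonpos htpos (by linarith) (by linarith)
  calc q * (t - s) ^ 2 * (s + t) ^ (q - 1) ≤ q * (t - s) ^ 2 * t ^ (q - 1) := by gcongr
    _ = q * t ^ (q - 1) * (t - s) * (t - s) := by ring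
    _ ≤ (t ^ q - s ^ q) * (t - s) := by gcongr; linarith

lemma add_rpow_le_rpow_add_rpow_of_nonpos {r s t : ℝ} (hr : r ≤ 0) (hs : 0 ≤ s) (ht : 0 ≤ t) :
    (s + t) ^ r ≤ s ^ r + t ^ r := by
  rcases ht.eq_or_lt with rfl | htpos
  · simpa using rpow_nonneg le_rfl r
  calc (s + t) ^ r ≤ t ^ r := rpow_le_rpow_of_nonpos htpos (by linarith) hr
    _ ≤ s ^ r + t ^ r := le_add_of_nonneg_left (rpow_nonneg hs r)

section InnerProductSpace

variable {E : Type*} [NormedAddCommGroup E] [InnerProductSpace ℝ E]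

lemma inner_rpow_smul_sub_rpow_smul_sub_eq {r : ℝ} (hr : r + 1 ≠ 0) (a b : E) :
    ⟪‖b‖ ^ r • b - ‖a‖ ^ r • a, b - a⟫ =
      (‖b‖ ^ (r + 1) - ‖a‖ ^ (r + 1)) * (‖b‖ - ‖a‖) +
        (‖a‖ ^ r + ‖b‖ ^ r) * (‖a‖ * ‖b‖ - ⟪a, b⟫) := by
  rw [rpow_add_one' (norm_nonneg a) hr, rpow_add_one' (norm_nonneg b) hr]
  simp only [inner_sub_left, inner_sub_right, real_inner_smul_left, real_inner_self_eq_norm_sq,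
    real_inner_comm a b]
  ring

theorem mul_norm_sub_sq_mul_rpow_le_inner_rpow_smul_sub {p : ℝ} (hp1 : 1 < p) (hp2 : p ≤ 2)
    (a b : E) :
    (p - 1) / 2 * ‖b - a‖ ^ 2 * (‖a‖ + ‖b‖) ^ (p - 2) ≤
      ⟪‖b‖ ^ (p - 2) • b - ‖a‖ ^ (p - 2) • a, b - a⟫ := by
  rw [inner_rpow_smul_sub_rpow_smul_sub_eq (by linarith) a b,
    norm_sub_sq_real, real_inner_comm a b, show p - 2 + 1 = p - 1 by ring]
  have hradial := mul_sq_mul_add_rpow_le_rpow_sub_rpow_mul_sub (q := p - 1) (by linarith)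
    (by linarith) (norm_nonneg a) (norm_nonneg b)
  rw [show p - 1 - 1 = p - 2 by ring] at hradial
  have hangular := add_rpow_le_rpow_add_rpow_of_nonpos (r := p - 2) (by linarith)
    (norm_nonneg a) (norm_nonneg b)
  have hcs : 0 ≤ ‖a‖ * ‖b‖ - ⟪a, b⟫ := sub_nonneg.2 (real_inner_le_norm a b)
  have hX : 0 ≤ (‖a‖ + ‖b‖) ^ (p - 2) := rpow_nonneg (by positivity) _
  nlinarith [mul_le_mul_of_nonneg_right hangular hcs, mul_nonneg (sq_nonneg (‖b‖ - ‖a‖)) hX,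
    mul_nonneg hcs hX]

end InnerProductSpace

theorem stmt_4 (p : ℝ) (hp1 : 1 < p) (hp2 : p < 2) :
    ∃ c : ℝ, 0 < c ∧ ∀ (N : ℕ), 1 ≤ N → ∀ a b : EuclideanSpace ℝ (Fin N), (a ≠ 0 ∨ b ≠ 0) →
      (inner ℝ ((‖b‖ ^ (p - 2)) • b - (‖a‖ ^ (p - 2)) • a) (b - a) : ℝ) ≥
        c * ‖b - a‖ ^ (2:ℝ) * (‖a‖ + ‖b‖) ^ (p - 2) := by
  refine ⟨(p - 1) / 2, by linarith, fun N _ a b _ => ?_⟩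
  rw [ge_iff_le, rpow_two]
  exact mul_norm_sub_sq_mul_rpow_le_inner_rpow_smul_sub hp1 hp2.le a b
end

section
/- Fix real parameters 0 < γ < 1 < q ≤ p < α + 1, positive constants A, B, C, D with D > 0, and define φ(t) = t^{p−1+γ} A + t^{q−1+γ} B − C − t^{α+γ} D for t > 0. Then φ' has a unique zero t̃ ∈ (0, ∞), φ is strictly increasing on (0, t̃) and strictly decreasing on (t̃, ∞). -/
set_option maxHeartbeats 1000000

theorem stmt_9 (γ p q α A B C D : ℝ)
    (hγ0 : 0 < γ) (hγ1 : γ < 1) (hq : 1 < q) (hqp : q ≤ p) (hpα : p < α + 1)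
    (hA : 0 < A) (hB : 0 < B) (hC : 0 < C) (hD : 0 < D) :
    ∃ t₀ : ℝ, 0 < t₀ ∧
      (∀ t, 0 < t →
        (deriv (fun s : ℝ => s ^ (p - 1 + γ) * A + s ^ (q - 1 + γ) * B - C - s ^ (α + γ) * D) t = 0
          ↔ t = t₀)) ∧
      StrictMonoOn (fun s : ℝ => s ^ (p - 1 + γ) * A + s ^ (q - 1 + γ) * B - C - s ^ (α + γ) * D)
        (Set.Ioo 0 t₀) ∧
      StrictAntiOn (fun s : ℝ => s ^ (p - 1 + γ) * A + s ^ (q - 1 + γ) * B - C - s ^ (α + γ) * D)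
        (Set.Ioi t₀) := by
  have hp : 1 < p := lt_of_lt_of_le hq hqp
  have hα : 0 < α := by linarith
  set φ : ℝ → ℝ := fun s : ℝ =>
    s ^ (p - 1 + γ) * A + s ^ (q - 1 + γ) * B - C - s ^ (α + γ) * D with hφ
  set c1 : ℝ := (p - 1 + γ) * A with hc1def
  set c2 : ℝ := (q - 1 + γ) * B with hc2def
  set c3 : ℝ := (α + γ) * D with hc3def
  have hc1 : 0 < c1 := mul_pos (by linarith) hA
  have hc2 : 0 < c2 := mul_pos (by linarith) hB
  have hc3 : 0 < c3 := mul_pos (by linarith) hD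
  set e1 : ℝ := p - 1 - α with he1def
  set e2 : ℝ := q - 1 - α with he2def
  have he1 : e1 < 0 := by simp only [he1def]; linarith
  have he2 : e2 < 0 := by simp only [he2def]; linarith
  set ψ : ℝ → ℝ := fun t => c1 * t ^ e1 + c2 * t ^ e2 - c3 with hψdef
  -- derivative of φ
  have hderiv : ∀ t : ℝ, 0 < t → HasDerivAt φ
      ((p - 1 + γ) * t ^ (p - 1 + γ - 1) * A + (q - 1 + γ) * t ^ (q - 1 + γ - 1) * B
        - (α + γ) * t ^ (α + γ - 1) * D) t := by
    intro t ht
    have h1 := (Real.hasDerivAt_rpow_const (x := t) (p := p - 1 + γ)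
      (Or.inl ht.ne')).mul_const A
    have h2 := (Real.hasDerivAt_rpow_const (x := t) (p := q - 1 + γ)
      (Or.inl ht.ne')).mul_const B
    have h3 := (Real.hasDerivAt_rpow_const (x := t) (p := α + γ)
      (Or.inl ht.ne')).mul_const D
    exact ((h1.add h2).sub_const C).sub h3
  have key : ∀ t : ℝ, 0 < t → deriv φ t = t ^ (α + γ - 1) * ψ t := by
    intro t ht
    rw [(hderiv t ht).deriv]
    have ee1 : p - 1 + γ - 1 = (α + γ - 1) + e1 := by simp only [he1def]; ring
    have ee2 : q - 1 + γ - 1 = (α + γ - 1) + e2 := by simp only [he2def]; ring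
    rw [ee1, ee2, Real.rpow_add ht, Real.rpow_add ht]
    simp only [hψdef, hc1def, hc2def, hc3def]
    ring
  -- ψ is strictly decreasing on (0, ∞)
  have hψanti : StrictAntiOn ψ (Set.Ioi 0) := by
    intro x hx y hy hxy
    have h1 : y ^ e1 < x ^ e1 := Real.rpow_lt_rpow_of_neg hx hxy he1
    have h2 : y ^ e2 < x ^ e2 := Real.rpow_lt_rpow_of_neg hx hxy he2
    have := mul_lt_mul_of_pos_left h1 hc1
    have := mul_lt_mul_of_pos_left h2 hc2
    simp only [hψdef]
    linarith
  -- a point where ψ is positive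
  set a : ℝ := ((c3 + 1) / c1) ^ e1⁻¹ with hadef
  have ha0 : 0 < a := Real.rpow_pos_of_pos (div_pos (by linarith) hc1) _
  have haψ : 0 < ψ a := by
    have hae : a ^ e1 = (c3 + 1) / c1 := by
      rw [hadef, Real.rpow_inv_rpow (le_of_lt (div_pos (by linarith) hc1)) (ne_of_lt he1)]
    have h2 : 0 < a ^ e2 := Real.rpow_pos_of_pos ha0 _
    have : c1 * a ^ e1 = c3 + 1 := by
      rw [hae]; field_simp
    simp only [hψdef]
    nlinarith
  -- a point where ψ is nonpositive
  set b1 : ℝ := (c3 / (2 * c1)) ^ e1⁻¹ with hb1def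
  set b2 : ℝ := (c3 / (2 * c2)) ^ e2⁻¹ with hb2def
  have hb10 : 0 < b1 := Real.rpow_pos_of_pos (div_pos hc3 (by linarith)) _
  have hb20 : 0 < b2 := Real.rpow_pos_of_pos (div_pos hc3 (by linarith)) _
  set b : ℝ := max b1 b2 with hbdef
  have hb0 : 0 < b := lt_max_of_lt_left hb10
  have hbψ : ψ b ≤ 0 := by
    have hb1e : b1 ^ e1 = c3 / (2 * c1) := by
      rw [hb1def, Real.rpow_inv_rpow (le_of_lt (div_pos hc3 (by linarith))) (ne_of_lt he1)]
    have hb2e : b2 ^ e2 = c3 / (2 * c2) := by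
      rw [hb2def, Real.rpow_inv_rpow (le_of_lt (div_pos hc3 (by linarith))) (ne_of_lt he2)]
    have h1 : b ^ e1 ≤ b1 ^ e1 :=
      Real.rpow_le_rpow_of_nonpos hb10 (le_max_left _ _) (le_of_lt he1)
    have h2 : b ^ e2 ≤ b2 ^ e2 :=
      Real.rpow_le_rpow_of_nonpos hb20 (le_max_right _ _) (le_of_lt he2)
    have e1' : c1 * b ^ e1 ≤ c3 / 2 := by
      calc c1 * b ^ e1 ≤ c1 * b1 ^ e1 := by nlinarith
        _ = c3 / 2 := by rw [hb1e]; field_simp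
    have e2' : c2 * b ^ e2 ≤ c3 / 2 := by
      calc c2 * b ^ e2 ≤ c2 * b2 ^ e2 := by nlinarith
        _ = c3 / 2 := by rw [hb2e]; field_simp
    simp only [hψdef]
    linarith
  have hab : a ≤ b := by
    by_contra h
    push_neg at h
    have := hψanti (Set.mem_Ioi.2 hb0) (Set.mem_Ioi.2 ha0) h
    linarith
  -- ψ continuous on [a, b]
  have hψcont : ContinuousOn ψ (Set.Icc a b) := by
    have hne : ∀ x ∈ Set.Icc a b, x ≠ 0 ∨ (0:ℝ) ≤ e1 := fun x hx =>
      Or.inl (ne_of_gt (lt_of_lt_of_le ha0 hx.1))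
    apply ContinuousOn.sub
    apply ContinuousOn.add
    · exact continuousOn_const.mul (continuousOn_id.rpow_const hne)
    · exact continuousOn_const.mul (continuousOn_id.rpow_const (fun x hx =>
        Or.inl (ne_of_gt (lt_of_lt_of_le ha0 hx.1))))
    · exact continuousOn_const
  -- find the zero of ψ
  obtain ⟨t₀, ht₀mem, ht₀⟩ : ∃ t₀ ∈ Set.Icc a b, ψ t₀ = 0 := by
    have := intermediate_value_Icc' hab hψcont
    have h0 : (0:ℝ) ∈ Set.Icc (ψ b) (ψ a) := ⟨hbψ, le_of_lt haψ⟩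
    obtain ⟨t₀, ht₀mem, ht₀⟩ := this h0
    exact ⟨t₀, ht₀mem, ht₀⟩
  have ht₀0 : 0 < t₀ := lt_of_lt_of_le ha0 ht₀mem.1
  -- sign of ψ
  have hψpos : ∀ t : ℝ, 0 < t → t < t₀ → 0 < ψ t := by
    intro t ht htt
    have := hψanti (Set.mem_Ioi.2 ht) (Set.mem_Ioi.2 ht₀0) htt
    linarith [ht₀ ▸ this]
  have hψneg : ∀ t : ℝ, t₀ < t → ψ t < 0 := by
    intro t htt
    have := hψanti (Set.mem_Ioi.2 ht₀0) (Set.mem_Ioi.2 (lt_trans ht₀0 htt)) htt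
    linarith [ht₀ ▸ this]
  refine ⟨t₀, ht₀0, ?_, ?_, ?_⟩
  · intro t ht
    rw [key t ht]
    constructor
    · intro h
      have hpow : (0:ℝ) < t ^ (α + γ - 1) := Real.rpow_pos_of_pos ht _
      have hψt : ψ t = 0 := by
        rcases mul_eq_zero.1 h with h' | h'
        · exact absurd h' (ne_of_gt hpow)
        · exact h'
      rcases lt_trichotomy t t₀ with h1 | h1 | h1
      · exact absurd hψt (ne_of_gt (hψpos t ht h1))
      · exact h1
      · exact absurd hψt (ne_of_lt (hψneg t h1))
    · intro h
      rw [h, ht₀, mul_zero]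
  · apply strictMonoOn_of_deriv_pos (convex_Ioo 0 t₀)
    · apply ContinuousOn.sub
      apply ContinuousOn.sub
      apply ContinuousOn.add
      · exact (continuousOn_id.rpow_const (fun x hx => Or.inl (ne_of_gt hx.1))).mul
          continuousOn_const
      · exact (continuousOn_id.rpow_const (fun x hx => Or.inl (ne_of_gt hx.1))).mul
          continuousOn_const
      · exact continuousOn_const
      · exact (continuousOn_id.rpow_const (fun x hx => Or.inl (ne_of_gt hx.1))).mul
          continuousOn_const
    · intro x hx
      rw [interior_Ioo] at hx
      rw [key x hx.1]
      exact mul_pos (Real.rpow_pos_of_pos hx.1 _) (hψpos x hx.1 hx.2)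
  · apply strictAntiOn_of_deriv_neg (convex_Ioi t₀)
    · have h0 : ∀ x ∈ Set.Ioi t₀, x ≠ 0 ∨ (0:ℝ) ≤ p - 1 + γ := fun x hx =>
        Or.inl (ne_of_gt (lt_trans ht₀0 hx))
      apply ContinuousOn.sub
      apply ContinuousOn.sub
      apply ContinuousOn.add
      · exact (continuousOn_id.rpow_const (fun x hx =>
          Or.inl (ne_of_gt (lt_trans ht₀0 hx)))).mul continuousOn_const
      · exact (continuousOn_id.rpow_const (fun x hx =>
          Or.inl (ne_of_gt (lt_trans ht₀0 hx)))).mul continuousOn_const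
      · exact continuousOn_const
      · exact (continuousOn_id.rpow_const (fun x hx =>
          Or.inl (ne_of_gt (lt_trans ht₀0 hx)))).mul continuousOn_const
    · intro x hx
      rw [interior_Ioi] at hx
      rw [key x (lt_trans ht₀0 hx)]
      exact mul_neg_of_pos_of_neg (Real.rpow_pos_of_pos (lt_trans ht₀0 hx) _) (hψneg x hx)
end
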